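/- Present the ΠΣI type structure on a pca A over ω as an inductively defined class I of triples ⟨σ, τ, B⟩ with σ, τ ∈ A and B ⊆ A × A (where σ ∼ τ means ⟨σ, τ, B⟩ ∈ I for some B, and a ∼_σ b means (a,b) ∈ B for some such triple). Then the third component is uniquely determined by the first: if ⟨σ, τ0, B0⟩ ∈ I and ⟨σ, τ1, B1⟩ ∈ I, then B0 = B1. -/
import Mathlib


universe u

/-- A partial combinatory algebra (pca): a set with at least two elements together
with a partial binary operation admitting combinators `k` and `s` such that
`k·a·b ≃ a`, `s·a·b` is defined, and `s·a·b·c ≃ a·c·(b·c)`. -/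
structure PCA (A : Type u) where
  ap : A → A → Part A
  nontriv : ∃ a b : A, a ≠ b
  k : A
  s : A
  k_spec : ∀ a b : A, (ap k a).bind (fun x => ap x b) = Part.some a
  s_def : ∀ a b : A, ((ap s a).bind (fun x => ap x b)).Dom
  s_spec : ∀ a b c : A,
    ((ap s a).bind (fun x => ap x b)).bind (fun x => ap x c) =
      (ap a c).bind (fun x => (ap b c).bind (fun y => ap x y))

namespace PCA

variable {A : Type u} (P : PCA A)

/-- The partial value `a·b·c` (application associates to the left). -/
def ap2 (a b c : A) : Part A := (P.ap a b).bind fun x => P.ap x c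

/-- The partial value `a·b·c·d`. -/
def ap3 (a b c d : A) : Part A := (P.ap2 a b c).bind fun x => P.ap x d

/-- The partial value `a·b·c·d·e`. -/
def ap4 (a b c d e : A) : Part A := (P.ap3 a b c d).bind fun x => P.ap x e

end PCA

/-- A pca over ω with an injective numeral map and a fixed pairing combinator
`pc` with projections `p0`, `p1`; `mkpair a b` denotes the (total) value of
`pc·a·b`. -/
structure TPCA (A : Type u) extends PCA A where
  num : ℕ → A
  num_inj : Function.Injective num
  succC : A
  predC : A
  dC : A
  succ_spec : ∀ n : ℕ, toPCA.ap succC (num n) = Part.some (num (n + 1))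
  pred_spec : ∀ n : ℕ, toPCA.ap predC (num (n + 1)) = Part.some (num n)
  d_eq : ∀ (n : ℕ) (a b : A), toPCA.ap4 dC (num n) (num n) a b = Part.some a
  d_ne : ∀ (n m : ℕ) (a b : A), n ≠ m →
    toPCA.ap4 dC (num n) (num m) a b = Part.some b
  pc : A
  p0 : A
  p1 : A
  mkpair : A → A → A
  mkpair_spec : ∀ a b : A, toPCA.ap2 pc a b = Part.some (mkpair a b)
  p0_spec : ∀ a b : A, toPCA.ap p0 (mkpair a b) = Part.some a
  p1_spec : ∀ a b : A, toPCA.ap p1 (mkpair a b) = Part.some b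

namespace TPCA

variable {A : Type u} (P : TPCA A)

/-- The code `N_n = p·0̄·n̄` of the finite type with `n` elements. -/
def NfinC (n : ℕ) : A := P.mkpair (P.num 0) (P.num n)

/-- The code `N = p·1̄·0̄` of the type of natural numbers. -/
def NC : A := P.mkpair (P.num 1) (P.num 0)

/-- The code `Π_σ i = p·2̄·(p·σ·i)` of a dependent product. -/
def PiC (σ i : A) : A := P.mkpair (P.num 2) (P.mkpair σ i)

/-- The code `Σ_σ i = p·3̄·(p·σ·i)` of a dependent sum. -/
def SiC (σ i : A) : A := P.mkpair (P.num 3) (P.mkpair σ i)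

/-- The code `I_σ(a,b) = p·4̄·(p·σ·(p·a·b))` of an identity type. -/
def IdC (σ a b : A) : A := P.mkpair (P.num 4) (P.mkpair σ (P.mkpair a b))

end TPCA

/-- The ΠΣI type structure on a pca over ω, presented as the inductively defined
class of triples `⟨σ, τ, B⟩` with `σ, τ ∈ A` and `B ⊆ A × A`; `σ ∼ τ` means
`⟨σ, τ, B⟩` is in the class for some `B`, and `a ∼_σ b` means `(a, b) ∈ B` for
some such triple. -/
inductive TS {A : Type u} (P : TPCA A) : A → A → (A → A → Prop) → Prop where
  | nfin (n : ℕ) :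
      TS P (P.NfinC n) (P.NfinC n)
        (fun a b => ∃ m : ℕ, m < n ∧ a = P.num m ∧ b = P.num m)
  | nat :
      TS P P.NC P.NC (fun a b => ∃ n : ℕ, a = P.num n ∧ b = P.num n)
  | pi (σ τ i j : A) (B : A → A → Prop) (iv jv : A → A → A)
      (F : A → A → A → A → Prop) :
      TS P σ τ B →
      (∀ a b : A, B a b → iv a b ∈ P.toPCA.ap i a) →
      (∀ a b : A, B a b → jv a b ∈ P.toPCA.ap j b) →
      (∀ a b : A, B a b → TS P (iv a b) (jv a b) (F a b)) →
      TS P (P.PiC σ i) (P.PiC τ j)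
        (fun f g => ∀ a b : A, B a b → ∃ fa gb : A,
          fa ∈ P.toPCA.ap f a ∧ gb ∈ P.toPCA.ap g b ∧ F a b fa gb)
  | sigma (σ τ i j : A) (B : A → A → Prop) (iv jv : A → A → A)
      (F : A → A → A → A → Prop) :
      TS P σ τ B →
      (∀ a b : A, B a b → iv a b ∈ P.toPCA.ap i a) →
      (∀ a b : A, B a b → jv a b ∈ P.toPCA.ap j b) →
      (∀ a b : A, B a b → TS P (iv a b) (jv a b) (F a b)) →
      TS P (P.SiC σ i) (P.SiC τ j)
        (fun a b => ∃ a₀ b₀ : A, a₀ ∈ P.toPCA.ap P.p0 a ∧ b₀ ∈ P.toPCA.ap P.p0 b ∧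
          B a₀ b₀ ∧ ∃ a₁ b₁ : A, a₁ ∈ P.toPCA.ap P.p1 a ∧ b₁ ∈ P.toPCA.ap P.p1 b ∧
          F a₀ b₀ a₁ b₁)
  | ident (σ τ a a' b b' : A) (B : A → A → Prop) :
      TS P σ τ B → B a a' → B b b' →
      TS P (P.IdC σ a b) (P.IdC τ a' b')
        (fun c d => c = P.num 0 ∧ d = P.num 0 ∧ B a b)

/-- `σ ∼ τ` in the ΠΣI type structure. -/
def TEquiv {A : Type u} (P : TPCA A) (σ τ : A) : Prop :=
  ∃ B : A → A → Prop, TS P σ τ B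

/-- `a ∼_σ b` in the ΠΣI type structure. -/
def MemT {A : Type u} (P : TPCA A) (σ a b : A) : Prop :=
  ∃ (τ : A) (B : A → A → Prop), TS P σ τ B ∧ B a b

section Aux

variable {A : Type u} {P : TPCA A}

lemma mkpair_inj {a b c d : A} (h : P.mkpair a b = P.mkpair c d) :
    a = c ∧ b = d := by
  have h0 := P.p0_spec a b
  have h1 := P.p1_spec a b
  rw [h, P.p0_spec] at h0
  rw [h, P.p1_spec] at h1
  exact ⟨(Part.some_inj.mp h0).symm, (Part.some_inj.mp h1).symm⟩

end Aux

/-- In the presentation of the ΠΣI type structure as an inductively defined class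
of triples `⟨σ, τ, B⟩`, the third component is uniquely determined by the first:
if `⟨σ, τ₀, B₀⟩` and `⟨σ, τ₁, B₁⟩` are both in the class, then `B₀ = B₁`. -/
theorem TS_third_component_unique {A : Type u} (P : TPCA A) {σ τ₀ τ₁ : A}
    {B₀ B₁ : A → A → Prop} (h₀ : TS P σ τ₀ B₀) (h₁ : TS P σ τ₁ B₁) :
    B₀ = B₁ := by
  induction h₀ generalizing τ₁ B₁ with
  | nfin n =>
    generalize hg : P.NfinC n = s at h₁
    cases h₁ with
    | nfin m =>
      simp only [TPCA.NfinC, TPCA.NC, TPCA.PiC, TPCA.SiC, TPCA.IdC] at hg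
      have := (mkpair_inj hg).2
      have := P.num_inj this
      subst this
      rfl
    | nat =>
      simp only [TPCA.NfinC, TPCA.NC, TPCA.PiC, TPCA.SiC, TPCA.IdC] at hg
      exact absurd (P.num_inj (mkpair_inj hg).1) (by omega)
    | pi σ' τ' i' j' B' iv' jv' F' h' hi' hj' hF' =>
      simp only [TPCA.NfinC, TPCA.NC, TPCA.PiC, TPCA.SiC, TPCA.IdC] at hg
      exact absurd (P.num_inj (mkpair_inj hg).1) (by omega)
    | sigma σ' τ' i' j' B' iv' jv' F' h' hi' hj' hF' =>
      simp only [TPCA.NfinC, TPCA.NC, TPCA.PiC, TPCA.SiC, TPCA.IdC] at hg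
      exact absurd (P.num_inj (mkpair_inj hg).1) (by omega)
    | ident σ' τ' a2 a2' b2 b2' B' h' ha' hb' =>
      simp only [TPCA.NfinC, TPCA.NC, TPCA.PiC, TPCA.SiC, TPCA.IdC] at hg
      exact absurd (P.num_inj (mkpair_inj hg).1) (by omega)
  | nat =>
    generalize hg : P.NC = s at h₁
    cases h₁ with
    | nfin m =>
      simp only [TPCA.NfinC, TPCA.NC, TPCA.PiC, TPCA.SiC, TPCA.IdC] at hg
      exact absurd (P.num_inj (mkpair_inj hg).1) (by omega)
    | nat =>
      rfl
    | pi σ' τ' i' j' B' iv' jv' F' h' hi' hj' hF' =>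
      simp only [TPCA.NfinC, TPCA.NC, TPCA.PiC, TPCA.SiC, TPCA.IdC] at hg
      exact absurd (P.num_inj (mkpair_inj hg).1) (by omega)
    | sigma σ' τ' i' j' B' iv' jv' F' h' hi' hj' hF' =>
      simp only [TPCA.NfinC, TPCA.NC, TPCA.PiC, TPCA.SiC, TPCA.IdC] at hg
      exact absurd (P.num_inj (mkpair_inj hg).1) (by omega)
    | ident σ' τ' a2 a2' b2 b2' B' h' ha' hb' =>
      simp only [TPCA.NfinC, TPCA.NC, TPCA.PiC, TPCA.SiC, TPCA.IdC] at hg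
      exact absurd (P.num_inj (mkpair_inj hg).1) (by omega)
  | pi σ τ i j B iv jv F h hi hj hF ih ihF =>
    generalize hg : P.PiC σ i = s at h₁
    cases h₁ with
    | nfin m =>
      simp only [TPCA.NfinC, TPCA.NC, TPCA.PiC, TPCA.SiC, TPCA.IdC] at hg
      exact absurd (P.num_inj (mkpair_inj hg).1) (by omega)
    | nat =>
      simp only [TPCA.NfinC, TPCA.NC, TPCA.PiC, TPCA.SiC, TPCA.IdC] at hg
      exact absurd (P.num_inj (mkpair_inj hg).1) (by omega)
    | pi σ' τ' i' j' B' iv' jv' F' h' hi' hj' hF' =>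
      simp only [TPCA.NfinC, TPCA.NC, TPCA.PiC, TPCA.SiC, TPCA.IdC] at hg
      obtain ⟨hσ, hii⟩ := mkpair_inj (mkpair_inj hg).2
      subst hσ; subst hii
      have hB : B = B' := ih h'
      subst hB
      have hFF : ∀ a b : A, B a b → F a b = F' a b := by
        intro a b hab
        have hiv : iv a b = iv' a b :=
          Part.mem_unique (hi a b hab) (hi' a b hab)
        exact ihF a b hab (hiv ▸ hF' a b hab)
      funext f g
      apply propext
      constructor
      · intro hfg a b hab
        obtain ⟨fa, gb, h1, h2, h3⟩ := hfg a b hab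
        exact ⟨fa, gb, h1, h2, hFF a b hab ▸ h3⟩
      · intro hfg a b hab
        obtain ⟨fa, gb, h1, h2, h3⟩ := hfg a b hab
        exact ⟨fa, gb, h1, h2, (hFF a b hab).symm ▸ h3⟩
    | sigma σ' τ' i' j' B' iv' jv' F' h' hi' hj' hF' =>
      simp only [TPCA.NfinC, TPCA.NC, TPCA.PiC, TPCA.SiC, TPCA.IdC] at hg
      exact absurd (P.num_inj (mkpair_inj hg).1) (by omega)
    | ident σ' τ' a2 a2' b2 b2' B' h' ha' hb' =>
      simp only [TPCA.NfinC, TPCA.NC, TPCA.PiC, TPCA.SiC, TPCA.IdC] at hg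
      exact absurd (P.num_inj (mkpair_inj hg).1) (by omega)
  | sigma σ τ i j B iv jv F h hi hj hF ih ihF =>
    generalize hg : P.SiC σ i = s at h₁
    cases h₁ with
    | nfin m =>
      simp only [TPCA.NfinC, TPCA.NC, TPCA.PiC, TPCA.SiC, TPCA.IdC] at hg
      exact absurd (P.num_inj (mkpair_inj hg).1) (by omega)
    | nat =>
      simp only [TPCA.NfinC, TPCA.NC, TPCA.PiC, TPCA.SiC, TPCA.IdC] at hg
      exact absurd (P.num_inj (mkpair_inj hg).1) (by omega)
    | pi σ' τ' i' j' B' iv' jv' F' h' hi' hj' hF' =>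
      simp only [TPCA.NfinC, TPCA.NC, TPCA.PiC, TPCA.SiC, TPCA.IdC] at hg
      exact absurd (P.num_inj (mkpair_inj hg).1) (by omega)
    | sigma σ' τ' i' j' B' iv' jv' F' h' hi' hj' hF' =>
      simp only [TPCA.NfinC, TPCA.NC, TPCA.PiC, TPCA.SiC, TPCA.IdC] at hg
      obtain ⟨hσ, hii⟩ := mkpair_inj (mkpair_inj hg).2
      subst hσ; subst hii
      have hB : B = B' := ih h'
      subst hB
      have hFF : ∀ a b : A, B a b → F a b = F' a b := by
        intro a b hab
        have hiv : iv a b = iv' a b :=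
          Part.mem_unique (hi a b hab) (hi' a b hab)
        exact ihF a b hab (hiv ▸ hF' a b hab)
      funext x y
      apply propext
      constructor
      · rintro ⟨a0, b0, h1, h2, h3, a1, b1, h4, h5, h6⟩
        exact ⟨a0, b0, h1, h2, h3, a1, b1, h4, h5, hFF a0 b0 h3 ▸ h6⟩
      · rintro ⟨a0, b0, h1, h2, h3, a1, b1, h4, h5, h6⟩
        exact ⟨a0, b0, h1, h2, h3, a1, b1, h4, h5, (hFF a0 b0 h3).symm ▸ h6⟩
    | ident σ' τ' a2 a2' b2 b2' B' h' ha' hb' =>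
      simp only [TPCA.NfinC, TPCA.NC, TPCA.PiC, TPCA.SiC, TPCA.IdC] at hg
      exact absurd (P.num_inj (mkpair_inj hg).1) (by omega)
  | ident σ τ a a' b b' B h ha hb ih =>
    generalize hg : P.IdC σ a b = s at h₁
    cases h₁ with
    | nfin m =>
      simp only [TPCA.NfinC, TPCA.NC, TPCA.PiC, TPCA.SiC, TPCA.IdC] at hg
      exact absurd (P.num_inj (mkpair_inj hg).1) (by omega)
    | nat =>
      simp only [TPCA.NfinC, TPCA.NC, TPCA.PiC, TPCA.SiC, TPCA.IdC] at hg
      exact absurd (P.num_inj (mkpair_inj hg).1) (by omega)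
    | pi σ' τ' i' j' B' iv' jv' F' h' hi' hj' hF' =>
      simp only [TPCA.NfinC, TPCA.NC, TPCA.PiC, TPCA.SiC, TPCA.IdC] at hg
      exact absurd (P.num_inj (mkpair_inj hg).1) (by omega)
    | sigma σ' τ' i' j' B' iv' jv' F' h' hi' hj' hF' =>
      simp only [TPCA.NfinC, TPCA.NC, TPCA.PiC, TPCA.SiC, TPCA.IdC] at hg
      exact absurd (P.num_inj (mkpair_inj hg).1) (by omega)
    | ident σ' τ' a2 a2' b2 b2' B' h' ha' hb' =>
      simp only [TPCA.NfinC, TPCA.NC, TPCA.PiC, TPCA.SiC, TPCA.IdC] at hg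
      obtain ⟨hσ, habs⟩ := mkpair_inj (mkpair_inj hg).2
      obtain ⟨hA, hB2⟩ := mkpair_inj habs
      subst hσ; subst hA; subst hB2
      have hB : B = B' := ih h'
      subst hB
      rfl
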